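/- arXiv:1607.06132 — 4 statements merged into one kernel-verified Lean document; each statement's English description precedes it below -/
import Mathlib

section
/- On a discretized unit line with points at spacing δ and k servers, the configuration placing servers uniformly (at positions (2j−1)/(2k) for j = 1..k) is a best configuration: for every other configuration C and every index i, the i-th smallest distance-to-nearest-server over all points under the uniform configuration is at most the i-th smallest such distance under C. -/
/-- Distance (in units of `δ`) from grid point `p` to the nearest server in `C`. -/
noncomputable def Dmin (δ : ℝ) (C : Finset ℤ) (p : ℤ) : ℝ :=
  δ * sInf ((fun s : ℤ => |(p : ℝ) - (s : ℝ)|) '' (C : Set ℤ))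

/-- The `i`-th smallest (0-indexed) distance-to-nearest-server over all grid
points `0, 1, …, N` (each at spacing `δ`), for server configuration `C`. -/
noncomputable def nthDist (δ : ℝ) (N : ℤ) (C : Finset ℤ) (i : ℕ) : ℝ :=
  (((Finset.Icc (0 : ℤ) N).val.map (Dmin δ C)).sort (· ≤ ·)).getD i 0

/-- The uniform configuration: `k` servers at positions `(2j−1)/(2k)`,
i.e. at grid points `(2j−1)·m` on the grid `{0, …, 2km}` with spacing
`δ = 1/(2km)`. -/
def uniformConfig (k m : ℕ) : Finset ℤ :=
  Finset.image (fun j : Fin k => (2 * (j : ℤ) + 1) * m) Finset.univ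

/-! All distances are `δ` times an integer, and for sorted sequences pointwise domination is the
same as domination of the counting functions `t ↦ #{x ≤ t}`. So it suffices that, for every
integer radius `d`, the uniform configuration has at least as many grid points within `d` of a
server as `C`. For `d < m` its `k` balls of radius `d` are disjoint and lie in the grid, giving
`k (2d + 1)` points, the most any `k` balls can cover; for `d ≥ m` it covers the whole grid. -/

namespace List

variable {α : Type*} [LinearOrder α]

theorem SortedLE.getElem_le_iff_lt_countP {L : List α} (hL : L.SortedLE) {i : ℕ}
    (hi : i < L.length) (t : α) : L[i] ≤ t ↔ i < L.countP (· ≤ t) := by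
  constructor
  · intro h
    have hprefix : ∀ x ∈ L.take (i + 1), x ≤ t := by
      intro x hx
      obtain ⟨j, hj, rfl⟩ := mem_iff_getElem.mp hx
      rw [getElem_take]
      exact (hL.getElem_le_getElem_of_le (by rw [length_take] at hj; omega)).trans h
    calc i < (L.take (i + 1)).length := by rw [length_take]; omega
      _ = (L.take (i + 1)).countP (· ≤ t) := (countP_eq_length.mpr (by simpa using hprefix)).symm
      _ ≤ L.countP (· ≤ t) := (take_sublist _ _).countP_le
  · intro h
    by_contra! hlt
    have hsuffix : ∀ x ∈ L.drop i, ¬ x ≤ t := by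
      intro x hx
      obtain ⟨j, hj, rfl⟩ := mem_iff_getElem.mp hx
      rw [getElem_drop, not_le]
      exact hlt.trans_le (hL.getElem_le_getElem_of_le (by omega))
    have hcount : L.countP (· ≤ t) ≤ i := calc
      L.countP (· ≤ t) = (L.take i).countP (· ≤ t) + (L.drop i).countP (· ≤ t) := by
          rw [← countP_append, take_append_drop]
      _ = (L.take i).countP (· ≤ t) := by
          rw [(countP_eq_zero (l := L.drop i)).mpr (by simpa using hsuffix), add_zero]
      _ ≤ (L.take i).length := countP_le_length
      _ ≤ i := length_take_le _ _
    omega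

theorem SortedLE.getD_le_getD_of_countP_le {L₁ L₂ : List α} (h₁ : L₁.SortedLE)
    (h₂ : L₂.SortedLE) (hlen : L₁.length = L₂.length)
    (hcount : ∀ t ∈ L₂, L₂.countP (· ≤ t) ≤ L₁.countP (· ≤ t)) (d : α) (i : ℕ) :
    L₁.getD i d ≤ L₂.getD i d := by
  by_cases hi : i < L₂.length
  · have hi₁ : i < L₁.length := hlen ▸ hi
    rw [getD_eq_getElem _ _ hi₁, getD_eq_getElem _ _ hi, h₁.getElem_le_iff_lt_countP hi₁]
    exact ((h₂.getElem_le_iff_lt_countP hi _).mp le_rfl).trans_le (hcount _ (getElem_mem hi))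
  · rw [getD_eq_default _ _ (by omega), getD_eq_default _ _ (by omega)]

end List

namespace Multiset

variable {α : Type*} [LinearOrder α]

theorem sort_getD_le_sort_getD_of_countP_le {s t : Multiset α} (hcard : card s = card t)
    (hcount : ∀ x ∈ t, t.countP (· ≤ x) ≤ s.countP (· ≤ x)) (d : α) (i : ℕ) :
    (s.sort (· ≤ ·)).getD i d ≤ (t.sort (· ≤ ·)).getD i d := by
  refine (pairwise_sort s _).sortedLE.getD_le_getD_of_countP_le (pairwise_sort t _).sortedLE
    (by simpa using hcard) (fun x hx => ?_) d i
  rw [mem_sort] at hx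
  simpa only [← coe_countP, sort_eq] using hcount x hx

end Multiset

open Finset

lemma Dmin_eq_mul_inf' (δ : ℝ) {C : Finset ℤ} (hC : C.Nonempty) (p : ℤ) :
    Dmin δ C p = δ * (C.inf' hC fun s => |p - s| : ℤ) := by
  rw [Dmin, apply_inf'_eq_inf'_comp hC Int.cast (fun _ _ => Int.cast_mono.map_inf _ _),
    inf'_eq_csInf_image]
  simp

lemma Dmin_le_mul_iff {δ : ℝ} (hδ : 0 < δ) {C : Finset ℤ} (hC : C.Nonempty) (p d : ℤ) :
    Dmin δ C p ≤ δ * d ↔ ∃ s ∈ C, |p - s| ≤ d := by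
  rw [Dmin_eq_mul_inf' δ hC, mul_le_mul_iff_right₀ hδ, Int.cast_le, inf'_le_iff]

noncomputable def nbhd (C : Finset ℤ) (d : ℤ) : Finset ℤ :=
  C.biUnion fun s => Icc (s - d) (s + d)

lemma mem_nbhd {C : Finset ℤ} {d p : ℤ} : p ∈ nbhd C d ↔ ∃ s ∈ C, |p - s| ≤ d := by
  simp only [nbhd, mem_biUnion, mem_Icc, abs_sub_le_iff]
  refine exists_congr fun s => and_congr_right fun _ => ?_
  constructor <;> rintro ⟨h₁, h₂⟩ <;> exact ⟨by omega, by omega⟩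

lemma card_Icc_sub_add (s d : ℤ) : #(Icc (s - d) (s + d)) = (2 * d + 1).toNat := by
  rw [Int.card_Icc]; ring_nf

lemma card_nbhd_le (C : Finset ℤ) (d : ℤ) : #(nbhd C d) ≤ #C * (2 * d + 1).toNat := by
  refine card_biUnion_le.trans_eq ?_
  rw [sum_congr rfl fun _ _ => card_Icc_sub_add _ _, sum_const, smul_eq_mul]

lemma card_filter_Dmin_le_mul {δ : ℝ} (hδ : 0 < δ) {C : Finset ℤ} (hC : C.Nonempty)
    (S : Finset ℤ) (d : ℤ) : #{p ∈ S | Dmin δ C p ≤ δ * d} = #(S ∩ nbhd C d) := by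
  rw [← filter_mem_eq_inter]
  simp only [Dmin_le_mul_iff hδ hC, mem_nbhd]

lemma mem_uniformConfig {k m : ℕ} {s : ℤ} :
    s ∈ uniformConfig k m ↔ ∃ j : ℤ, 0 ≤ j ∧ j < k ∧ s = (2 * j + 1) * m := by
  simp only [uniformConfig, mem_image, mem_univ, true_and]
  constructor
  · rintro ⟨j, rfl⟩
    exact ⟨j, j.val.cast_nonneg, by exact_mod_cast j.isLt, rfl⟩
  · rintro ⟨j, hj₀, hjk, rfl⟩
    exact ⟨⟨j.toNat, by omega⟩, by simp [hj₀]⟩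

lemma uniformConfig_nonempty {k : ℕ} (hk : 0 < k) (m : ℕ) : (uniformConfig k m).Nonempty :=
  ⟨m, mem_uniformConfig.mpr ⟨0, le_rfl, by exact_mod_cast hk, by ring⟩⟩

lemma exists_mem_uniformConfig_abs_sub_le {k m : ℕ} (hk : 0 < k) (hm : 0 < m) {p : ℤ}
    (hp : p ∈ Icc (0 : ℤ) (2 * k * m)) : ∃ s ∈ uniformConfig k m, |p - s| ≤ m := by
  rw [mem_Icc] at hp
  have hdiv := Int.mul_ediv_add_emod p (2 * m)
  have hr₀ : 0 ≤ p % (2 * m) := Int.emod_nonneg p (by omega)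
  have hr₁ : p % (2 * m) < 2 * m := Int.emod_lt_of_pos p (by omega)
  have hq₀ : 0 ≤ p / (2 * m) := Int.ediv_nonneg hp.1 (by omega)
  -- the server of the block `[2jm, 2(j+1)m]` containing `p`; the last block also contains `2km`
  set j := min ((k : ℤ) - 1) (p / (2 * m))
  refine ⟨(2 * j + 1) * m, mem_uniformConfig.mpr ⟨j, by omega, by omega, rfl⟩,
    abs_le.mpr ?_⟩
  rcases le_total (p / (2 * m)) ((k : ℤ) - 1) with h | h
  · rw [show j = p / (2 * m) from min_eq_right h]
    constructor <;> linarith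
  · rw [show j = (k : ℤ) - 1 from min_eq_left h]
    have : 2 * (m : ℤ) * (k - 1) ≤ 2 * m * (p / (2 * m)) := by gcongr
    constructor <;> nlinarith

lemma Icc_subset_nbhd_uniformConfig {k m : ℕ} (hk : 0 < k) (hm : 0 < m) {d : ℤ} (hd : m ≤ d) :
    Icc (0 : ℤ) (2 * k * m) ⊆ nbhd (uniformConfig k m) d := fun _ hp =>
  let ⟨s, hs, hps⟩ := exists_mem_uniformConfig_abs_sub_le hk hm hp
  mem_nbhd.mpr ⟨s, hs, hps.trans hd⟩

lemma nbhd_uniformConfig_subset {k m : ℕ} {d : ℤ} (hd : d < m) :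
    nbhd (uniformConfig k m) d ⊆ Icc (0 : ℤ) (2 * k * m) := by
  intro p hp
  obtain ⟨s, hs, hps⟩ := mem_nbhd.mp hp
  obtain ⟨j, hj₀, hjk, rfl⟩ := mem_uniformConfig.mp hs
  rw [abs_le] at hps
  rw [mem_Icc]
  constructor <;> nlinarith

lemma card_nbhd_uniformConfig {k m : ℕ} {d : ℤ} (hd : d < m) :
    #(nbhd (uniformConfig k m) d) = k * (2 * d + 1).toNat := by
  rw [nbhd, uniformConfig, image_biUnion, card_biUnion,
    sum_congr rfl fun _ _ => card_Icc_sub_add _ _, sum_const, card_univ, Fintype.card_fin,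
    smul_eq_mul]
  intro i _ j _ hij
  rw [Function.onFun_apply, disjoint_left]
  intro p hpi hpj
  rw [mem_Icc] at hpi hpj
  rcases Fin.lt_or_lt_of_ne hij with h | h
  · have : (i : ℤ) + 1 ≤ j := by exact_mod_cast h
    nlinarith
  · have : (j : ℤ) + 1 ≤ i := by exact_mod_cast h
    nlinarith

lemma card_inter_nbhd_le_card_inter_nbhd_uniformConfig {k m : ℕ} (hk : 0 < k) (hm : 0 < m)
    {C : Finset ℤ} (hC : #C = k) (d : ℤ) :
    #(Icc (0 : ℤ) (2 * k * m) ∩ nbhd C d)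
      ≤ #(Icc (0 : ℤ) (2 * k * m) ∩ nbhd (uniformConfig k m) d) := by
  rcases lt_or_ge d m with hd | hd
  · rw [inter_eq_right.mpr (nbhd_uniformConfig_subset hd), card_nbhd_uniformConfig hd, ← hC]
    exact (card_le_card inter_subset_right).trans (card_nbhd_le C d)
  · rw [inter_eq_left.mpr (Icc_subset_nbhd_uniformConfig hk hm hd)]
    exact card_le_card inter_subset_left

lemma nthDist_le_nthDist {δ : ℝ} {N : ℤ} {C C' : Finset ℤ}
    (h : ∀ p ∈ Icc 0 N,
      #{q ∈ Icc 0 N | Dmin δ C' q ≤ Dmin δ C' p}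
        ≤ #{q ∈ Icc 0 N | Dmin δ C q ≤ Dmin δ C' p})
    (i : ℕ) : nthDist δ N C i ≤ nthDist δ N C' i := by
  refine Multiset.sort_getD_le_sort_getD_of_countP_le (by simp) (fun x hx => ?_) 0 i
  obtain ⟨p, hp, rfl⟩ := Multiset.mem_map.mp hx
  simpa [Multiset.countP_map, card_def] using h p hp

theorem uniform_is_best_configuration_general
    (k m : ℕ) (hk : 0 < k) (hm : 0 < m)
    (C : Finset ℤ) (hCcard : C.card = k) :
    ∀ i : ℕ,
      nthDist (1 / (2 * k * m)) (2 * k * m) (uniformConfig k m) i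
        ≤ nthDist (1 / (2 * k * m)) (2 * k * m) C i := by
  have hδ : (0 : ℝ) < 1 / (2 * k * m) := by positivity
  have hC : C.Nonempty := card_pos.mp (hCcard ▸ hk)
  refine nthDist_le_nthDist fun p _ => ?_
  rw [Dmin_eq_mul_inf' _ hC, card_filter_Dmin_le_mul hδ hC,
    card_filter_Dmin_le_mul hδ (uniformConfig_nonempty hk m)]
  exact card_inter_nbhd_le_card_inter_nbhd_uniformConfig hk hm hCcard _

/-- On the discretized unit line, the uniform configuration is a best
configuration: its sorted distance sequence is pointwise at most that of any
configuration `C` of `k` servers. -/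
theorem uniform_is_best_configuration
    (k m : ℕ) (hk : 0 < k) (hm : 0 < m)
    (C : Finset ℤ) (hCcard : C.card = k)
    (hCsub : C ⊆ Finset.Icc (0 : ℤ) (2 * k * m)) :
    ∀ i : ℕ,
      nthDist (1 / (2 * k * m)) (2 * k * m) (uniformConfig k m) i
        ≤ nthDist (1 / (2 * k * m)) (2 * k * m) C i :=
  uniform_is_best_configuration_general k m hk hm C hCcard
end

section
/- For any δ > 0 and any two configurations C₁, C₂ of k servers on the discretized unit line, the i-th smallest distance-to-nearest-server under C₁ is at most 2k times the i-th smallest distance-to-nearest-server under C₂, for every index i. -/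
/-! If the `i`-th smallest distance under `C₂` is `δ m`, then at least `i + 1` grid points lie
within `m` of the `k` servers of `C₂`, so `i + 1 ≤ k (2m + 1)`. On the other hand the grid points
within `2km` of `C₁` number at least `min (N + 1) (k (2m + 1))`: the extreme servers of `C₁` are
at least `k - 1` apart, and their neighbourhoods of radius `2km` already contain that many
points. Hence the `i`-th smallest distance under `C₁` is at most `2k δ m`. -/

open Finset

theorem List.Pairwise.getElem_le_iff_lt_countP {α : Type*} [LinearOrder α] {l : List α}
    (hl : l.Pairwise (· ≤ ·)) {i : ℕ} (hi : i < l.length) (t : α) :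
    l[i] ≤ t ↔ i < l.countP (· ≤ t) := by
  constructor
  · intro h
    have htake : ∀ x ∈ l.take (i + 1), x ≤ t := by
      intro x hx
      obtain ⟨j, hj, rfl⟩ := List.mem_iff_getElem.mp hx
      rw [List.getElem_take]
      have hji : j ≤ i := by simp only [List.length_take] at hj; omega
      exact (hl.rel_get_of_le (a := ⟨j, by omega⟩) (b := ⟨i, hi⟩) hji).trans h
    calc i < (l.take (i + 1)).countP (· ≤ t) := by
          rw [List.countP_eq_length.2 (by simpa using htake), List.length_take]; omega
      _ ≤ l.countP (· ≤ t) := (List.take_sublist _ _).countP_le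
  · contrapose!
    intro h
    have hdrop : ∀ x ∈ l.drop i, t < x := by
      have hsorted := hl.sublist (List.drop_sublist i l)
      rw [List.drop_eq_getElem_cons hi, List.pairwise_cons] at hsorted
      rw [List.drop_eq_getElem_cons hi]
      rintro x (_ | ⟨_, hx⟩)
      · exact h
      · exact h.trans_le (hsorted.1 x hx)
    calc l.countP (· ≤ t) = (l.take i).countP (· ≤ t) + (l.drop i).countP (· ≤ t) := by
          rw [← List.countP_append, List.take_append_drop]
      _ = (l.take i).countP (· ≤ t) := by
          rw [List.countP_eq_zero (l := l.drop i) |>.2 fun x hx => by simpa using hdrop x hx,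
            add_zero]
      _ ≤ i := List.countP_le_length.trans (List.length_take_le _ _)

theorem Multiset.getElem_sort_le_iff {α : Type*} [LinearOrder α] {s : Multiset α} {i : ℕ}
    (hi : i < (s.sort (· ≤ ·)).length) (t : α) :
    (s.sort (· ≤ ·))[i] ≤ t ↔ i < s.countP (· ≤ t) := by
  rw [(s.pairwise_sort _).getElem_le_iff_lt_countP hi, ← Multiset.coe_countP, Multiset.sort_eq]

theorem dmin_eq_mul_inf' (δ : ℝ) {C : Finset ℤ} (hC : C.Nonempty) (p : ℤ) :
    Dmin δ C p = δ * (C.inf' hC fun s => (p - s).natAbs : ℕ) := by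
  rw [Dmin, Nat.cast_finsetInf', Finset.inf'_eq_csInf_image]
  congr! with s
  simp

theorem dmin_le_mul_iff {δ : ℝ} (hδ : 0 < δ) {C : Finset ℤ} (hC : C.Nonempty) (p : ℤ) (r : ℕ) :
    Dmin δ C p ≤ δ * r ↔ ∃ s ∈ C, (p - s).natAbs ≤ r := by
  rw [dmin_eq_mul_inf' δ hC, mul_le_mul_iff_right₀ hδ, Nat.cast_le, Finset.inf'_le_iff]

noncomputable def nearPoints (N : ℤ) (C : Finset ℤ) (r : ℕ) : Finset ℤ :=
  {p ∈ Icc 0 N | ∃ s ∈ C, (p - s).natAbs ≤ r}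

section nthDist

variable {δ : ℝ} {N : ℤ} {C : Finset ℤ}

theorem length_sort_map_dmin :
    (((Icc 0 N).val.map (Dmin δ C)).sort (· ≤ ·)).length = (N + 1).toNat := by
  rw [Multiset.length_sort, Multiset.card_map, ← Finset.card_def, Int.card_Icc, sub_zero]

theorem nthDist_eq_zero_of_lt {i : ℕ} (hi : N < i) : nthDist δ N C i = 0 :=
  List.getD_eq_default _ _ (by rw [length_sort_map_dmin]; omega)

theorem nthDist_le_iff {i : ℕ} (hi : i ≤ N) (t : ℝ) :
    nthDist δ N C i ≤ t ↔ i < #{p ∈ Icc 0 N | Dmin δ C p ≤ t} := by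
  have hlen : i < (((Icc 0 N).val.map (Dmin δ C)).sort (· ≤ ·)).length := by
    rw [length_sort_map_dmin]; omega
  rw [nthDist, List.getD_eq_getElem _ _ hlen, Multiset.getElem_sort_le_iff, Multiset.countP_map,
    Finset.card_def, Finset.filter_val]

theorem nthDist_le_mul_iff (hδ : 0 < δ) (hC : C.Nonempty) {i : ℕ} (hi : i ≤ N) (r : ℕ) :
    nthDist δ N C i ≤ δ * r ↔ i < #(nearPoints N C r) := by
  simp_rw [nthDist_le_iff hi, dmin_le_mul_iff hδ hC, nearPoints]

theorem exists_nthDist_eq_mul (hC : C.Nonempty) {i : ℕ} (hi : i ≤ N) :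
    ∃ m : ℕ, nthDist δ N C i = δ * m := by
  have hlen : i < (((Icc 0 N).val.map (Dmin δ C)).sort (· ≤ ·)).length := by
    rw [length_sort_map_dmin]; omega
  obtain ⟨p, -, hp⟩ := Multiset.mem_map.1 <| (Multiset.mem_sort _).1 (List.getElem_mem hlen)
  exact ⟨_, by rw [nthDist, List.getD_eq_getElem _ _ hlen, ← hp, dmin_eq_mul_inf' δ hC]⟩

end nthDist

theorem card_nearPoints_le (N : ℤ) (C : Finset ℤ) (r : ℕ) :
    #(nearPoints N C r) ≤ #C * (2 * r + 1) := by
  have hsub : nearPoints N C r ⊆ C.biUnion fun s => Icc (s - r) (s + r) := by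
    intro p hp
    obtain ⟨-, s, hs, hps⟩ := mem_filter.1 hp
    exact mem_biUnion.2 ⟨s, hs, mem_Icc.2 (by omega)⟩
  calc #(nearPoints N C r) ≤ ∑ s ∈ C, #(Icc (s - r) (s + r)) :=
        (card_le_card hsub).trans card_biUnion_le
    _ = #C * (2 * r + 1) := sum_const_nat fun s _ => by rw [Int.card_Icc]; omega

section nearPoints

variable {N : ℤ} {C : Finset ℤ}

theorem card_le_card_nearPoints (hC : C ⊆ Icc 0 N) (r : ℕ) : #C ≤ #(nearPoints N C r) :=
  card_le_card fun s hs => mem_filter.2 ⟨hC hs, s, hs, by simp⟩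

theorem min_le_card_nearPoints (hC : C ⊆ Icc 0 N) (hne : C.Nonempty) {R : ℕ} (hR : #C ≤ R + 1) :
    min (N + 1) (R + #C) ≤ #(nearPoints N C R) := by
  set a := C.min' hne
  set b := C.max' hne
  have ha : 0 ≤ a ∧ a ≤ N := mem_Icc.1 (hC (C.min'_mem hne))
  have hb : 0 ≤ b ∧ b ≤ N := mem_Icc.1 (hC (C.max'_mem hne))
  have hab : a ≤ b := C.min'_le_max' hne
  have hcard : #C ≤ b + 1 - a := by
    have := card_le_card (t := Icc a b) fun x hx => mem_Icc.2 ⟨C.min'_le x hx, C.le_max' x hx⟩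
    rw [Int.card_Icc] at this
    omega
  -- The neighbourhoods of the extreme servers are either disjoint, with `2R + 2 ≥ R + #C` points,
  -- or merge into one interval containing `[a, b]`.
  set Ia := Icc (max 0 (a - R)) (min N (a + R))
  set Ib := Icc (max 0 (b - R)) (min N (b + R))
  have hsub : Ia ∪ Ib ⊆ nearPoints N C R := by
    intro p hp
    refine mem_filter.2 ⟨?_, ?_⟩
    · rcases mem_union.1 hp with hp | hp <;> simp only [Ia, Ib, mem_Icc] at hp ⊢ <;> omega
    · rcases mem_union.1 hp with hp | hp
      · exact ⟨a, C.min'_mem hne, by simp only [Ia, mem_Icc] at hp; omega⟩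
      · exact ⟨b, C.max'_mem hne, by simp only [Ib, mem_Icc] at hp; omega⟩
  have hinter : Ia ∩ Ib = Icc (max (max 0 (a - R)) (max 0 (b - R)))
      (min (min N (a + R)) (min N (b + R))) := by
    ext; simp only [Ia, Ib, mem_inter, mem_Icc]; omega
  have hunion := card_union_add_card_inter Ia Ib
  rw [hinter, Int.card_Icc, Int.card_Icc, Int.card_Icc] at hunion
  have := card_le_card hsub
  omega

theorem min_le_card_nearPoints_two_mul (hC : C ⊆ Icc 0 N) (hne : C.Nonempty) (r : ℕ) :
    min (N + 1) ((#C * (2 * r + 1) : ℕ) : ℤ) ≤ #(nearPoints N C (2 * #C * r)) := by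
  rcases r.eq_zero_or_pos with rfl | hr
  · have := card_le_card_nearPoints hC 0
    simp only [mul_zero, zero_add, mul_one]
    omega
  · have := min_le_card_nearPoints hC hne (R := 2 * #C * r) (by nlinarith)
    push_cast at this ⊢
    convert this using 2
    ring

end nearPoints

theorem sorted_distances_ratio_le_two_k_general
    (δ : ℝ) (hδ : 0 < δ) (k : ℕ) (hk : 0 < k) (N : ℤ)
    (C₁ C₂ : Finset ℤ)
    (hC₁card : C₁.card = k) (hC₂card : C₂.card = k)
    (hC₁sub : C₁ ⊆ Finset.Icc (0 : ℤ) N) :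
    ∀ i : ℕ, nthDist δ N C₁ i ≤ 2 * k * nthDist δ N C₂ i := by
  intro i
  rcases lt_or_ge N i with hN | hi
  · rw [nthDist_eq_zero_of_lt hN, nthDist_eq_zero_of_lt hN, mul_zero]
  have hC₁ : C₁.Nonempty := card_pos.1 (hC₁card ▸ hk)
  have hC₂ : C₂.Nonempty := card_pos.1 (hC₂card ▸ hk)
  obtain ⟨m, hm⟩ := exists_nthDist_eq_mul (δ := δ) hC₂ hi
  have h₂ : i < #(nearPoints N C₂ m) := (nthDist_le_mul_iff hδ hC₂ hi m).1 hm.le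
  have h₁ : i < #(nearPoints N C₁ (2 * k * m)) := by
    have hup := card_nearPoints_le N C₂ m
    have hlow := min_le_card_nearPoints_two_mul hC₁sub hC₁ m
    rw [hC₁card] at hlow
    rw [hC₂card] at hup
    omega
  calc nthDist δ N C₁ i ≤ δ * ↑(2 * k * m) := (nthDist_le_mul_iff hδ hC₁ hi _).2 h₁
    _ = 2 * k * nthDist δ N C₂ i := by rw [hm]; push_cast; ring

/-- For any `δ > 0` and any two configurations `C₁`, `C₂` of `k` servers on the
discretized line, the `i`-th smallest distance-to-nearest-server under `C₁`
is at most `2k` times the `i`-th smallest under `C₂`. -/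
theorem sorted_distances_ratio_le_two_k
    (δ : ℝ) (hδ : 0 < δ) (k : ℕ) (hk : 0 < k) (N : ℤ)
    (C₁ C₂ : Finset ℤ)
    (hC₁card : C₁.card = k) (hC₂card : C₂.card = k)
    (hC₁sub : C₁ ⊆ Finset.Icc (0 : ℤ) N) (hC₂sub : C₂ ⊆ Finset.Icc (0 : ℤ) N) :
    ∀ i : ℕ, nthDist δ N C₁ i ≤ 2 * k * nthDist δ N C₂ i :=
  sorted_distances_ratio_le_two_k_general δ hδ k hk N C₁ C₂ hC₁card hC₂card hC₁sub
end

section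
/- Counting lower bound for k-Center on a star: Let the star have m−1 rays of length d and one ray of length 4kd−d, with m = (kd)³. The number of request sequences of length n with k-Center cost at most (2d/3)·n is at most (6kd)ⁿ·(3md)^{n/3}, while the number of sequences with cost at most 18n for the center-anchored algorithm A is at least ((kd)³)ⁿ... consequently for large d there are strictly more A-cheap sequences than k-Center-cheap sequences, so k-Center's bijective ratio against A is Ω(d). -/
open scoped Classical

/-!
Classify a request sequence by the set `E` of steps at which k-Center pays more than `2d`.
If the total k-Center cost is at most `2d · n/3`, then `|E| ≤ n/3`; for fixed `E` there are
at most `(3kd)^(n-|E|) (3md)^|E|` sequences, and there are at most `2ⁿ` sets `E`, which gives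
`(6kd)ⁿ (3md)^(n/3)`. Every sequence of `A`-cheap points is cheap for `A`, which gives `mⁿ`,
and for `m = (kd)³` and `d ≥ 26` this is strictly larger. So no bijection can map every
`A`-cheap sequence to a sequence that k-Center serves at cost below `2d n/3 = (d/27) · 18n`.
-/

open Finset

theorem card_piFinset_ite_mem {ι α : Type*} [Fintype ι] [DecidableEq ι] (E : Finset ι)
    (s u : Finset α) :
    #(Fintype.piFinset fun i => if i ∈ E then s else u) =
      #s ^ #E * #u ^ (Fintype.card ι - #E) := by
  rw [Fintype.card_piFinset]
  simp only [apply_ite card]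
  rw [prod_ite, prod_const, prod_const, filter_mem_eq_inter, univ_inter,
    filter_not, filter_mem_eq_inter, univ_inter, card_sdiff_of_subset (subset_univ E), card_univ]

section Counting

variable {ι P : Type*} [Fintype ι]

noncomputable def costlyIndices (c : P → ℝ) (t : ℝ) (σ : ι → P) : Finset ι :=
  {i | ¬ c (σ i) ≤ t}

theorem card_costlyIndices_le {c : P → ℝ} (hc : ∀ p, 0 ≤ c p) {t r : ℝ} (ht : 0 < t)
    {σ : ι → P} (hσ : ∑ i, c (σ i) ≤ t * r) : (#(costlyIndices c t σ) : ℝ) ≤ r := by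
  refine le_of_mul_le_mul_left ?_ ht
  calc t * #(costlyIndices c t σ) = ∑ i ∈ costlyIndices c t σ, t := by
        rw [sum_const, nsmul_eq_mul, mul_comm]
    _ ≤ ∑ i ∈ costlyIndices c t σ, c (σ i) :=
        sum_le_sum fun i hi => (not_le.mp (mem_filter.mp hi).2).le
    _ ≤ ∑ i, c (σ i) := sum_le_sum_of_subset_of_nonneg (subset_univ _) fun i _ _ => hc _
    _ ≤ t * r := hσ

variable [Fintype P] [DecidableEq ι]

theorem filter_costlyIndices_eq_piFinset (c : P → ℝ) (t : ℝ) (E : Finset ι) :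
    ({σ | costlyIndices c t σ = E} : Finset (ι → P)) =
      Fintype.piFinset fun i =>
        if i ∈ E then ({p | ¬ c p ≤ t} : Finset P) else ({p | c p ≤ t} : Finset P) := by
  ext σ
  simp only [mem_filter, mem_univ, true_and, Fintype.mem_piFinset, Finset.ext_iff,
    costlyIndices]
  refine forall_congr' fun i => ?_
  by_cases hi : i ∈ E <;> simp [hi]

theorem card_filter_sum_le_mul_le (c : P → ℝ) (hc : ∀ p, 0 ≤ c p) {t r a b : ℝ}
    (ht : 0 < t) (ha : 1 ≤ a) (hb : 1 ≤ b) (hG : (#{p | c p ≤ t} : ℝ) ≤ a)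
    (hB : (#{p | ¬ c p ≤ t} : ℝ) ≤ b) :
    (#{σ : ι → P | ∑ i, c (σ i) ≤ t * r} : ℝ) ≤ (2 * a) ^ Fintype.card ι * b ^ r := by
  set n := Fintype.card ι
  set cheap : Finset (Finset ι) := {E | (#E : ℝ) ≤ r}
  have hsub : ({σ : ι → P | ∑ i, c (σ i) ≤ t * r} : Finset (ι → P)) ⊆
      cheap.biUnion fun E => {σ | costlyIndices c t σ = E} := by
    intro σ hσ
    simp only [mem_biUnion, mem_filter, mem_univ, true_and, cheap] at hσ ⊢
    exact ⟨_, card_costlyIndices_le hc ht hσ, rfl⟩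
  have hterm : ∀ E ∈ cheap,
      (#{σ : ι → P | costlyIndices c t σ = E} : ℝ) ≤ a ^ n * b ^ r := by
    intro E hE
    rw [filter_costlyIndices_eq_piFinset, card_piFinset_ite_mem]
    push_cast
    rw [mul_comm]
    have hEr : (#E : ℝ) ≤ r := (mem_filter.mp hE).2
    gcongr
    · calc (#{p | c p ≤ t} : ℝ) ^ (n - #E) ≤ a ^ (n - #E) := by gcongr
        _ ≤ a ^ n := pow_le_pow_right₀ ha (Nat.sub_le n _)
    · calc (#{p | ¬ c p ≤ t} : ℝ) ^ #E ≤ b ^ #E := by gcongr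
        _ = b ^ ((#E : ℕ) : ℝ) := (Real.rpow_natCast b _).symm
        _ ≤ b ^ r := Real.rpow_le_rpow_of_exponent_le hb hEr
  calc (#{σ : ι → P | ∑ i, c (σ i) ≤ t * r} : ℝ)
      ≤ ∑ E ∈ cheap, (#{σ : ι → P | costlyIndices c t σ = E} : ℝ) := by
        exact_mod_cast (card_le_card hsub).trans card_biUnion_le
    _ ≤ #cheap * (a ^ n * b ^ r) := by
        simpa only [sum_const, nsmul_eq_mul] using sum_le_sum hterm
    _ ≤ 2 ^ n * (a ^ n * b ^ r) := by
        gcongr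
        exact_mod_cast (card_le_univ cheap).trans (by simp [n])
    _ = (2 * a) ^ n * b ^ r := by ring

end Counting

theorem pow_card_le_card_filter_sum_le {ι P : Type*} [Fintype ι] [DecidableEq ι] [Fintype P]
    (c : P → ℝ) (s : ℝ) : #{p | c p ≤ s} ^ Fintype.card ι ≤
      #{σ : ι → P | ∑ i, c (σ i) ≤ s * Fintype.card ι} := by
  have hsub : Fintype.piFinset (fun _ : ι => ({p | c p ≤ s} : Finset P)) ⊆
      ({σ : ι → P | ∑ i, c (σ i) ≤ s * Fintype.card ι} : Finset (ι → P)) := by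
    intro σ hσ
    rw [Fintype.mem_piFinset] at hσ
    refine mem_filter.mpr ⟨mem_univ σ, ?_⟩
    calc ∑ i, c (σ i) ≤ ∑ _i : ι, s := sum_le_sum fun i _ => (mem_filter.mp (hσ i)).2
      _ = s * Fintype.card ι := by rw [sum_const, card_univ, nsmul_eq_mul, mul_comm]
  simpa only [Fintype.card_piFinset, prod_const, card_univ] using card_le_card hsub

theorem Equiv.exists_notMem_and_apply_mem_of_card_lt {α : Type*} (e : α ≃ α) {s t : Finset α}
    (h : #s < #t) : ∃ x, x ∉ s ∧ e x ∈ t := by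
  obtain ⟨x, hxt, hxs⟩ :=
    exists_mem_notMem_of_card_lt_card (s := s) (t := t.map e.symm.toEmbedding) (by rwa [card_map])
  exact ⟨x, hxs, mem_map_equiv.mp hxt⟩

theorem pow_mul_rpow_div_three_lt_pow {x y z : ℝ} (hx : 0 ≤ x) (hy : 0 ≤ y) (hz : 0 ≤ z)
    (h : x ^ 3 * y < z ^ 3) {n : ℕ} (hn : 0 < n) : x ^ n * y ^ ((n : ℝ) / 3) < z ^ n := by
  have cube_rpow : ∀ w : ℝ, 0 ≤ w → (w ^ 3) ^ ((n : ℝ) / 3) = w ^ n := fun w hw => by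
    rw [← Real.rpow_natCast w 3, ← Real.rpow_mul hw, Nat.cast_ofNat,
      mul_div_cancel₀ _ three_ne_zero, Real.rpow_natCast]
  calc x ^ n * y ^ ((n : ℝ) / 3) = (x ^ 3 * y) ^ ((n : ℝ) / 3) := by
        rw [Real.mul_rpow (by positivity) hy, cube_rpow x hx]
    _ < (z ^ 3) ^ ((n : ℝ) / 3) := Real.rpow_lt_rpow (by positivity) h (by positivity)
    _ = z ^ n := cube_rpow z hz

theorem six_mul_pow_mul_rpow_lt_pow {k d n : ℕ} (hk : 1 ≤ k) (hd : 26 ≤ d) (hn : 0 < n) :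
    (6 * k * d : ℝ) ^ n * (3 * ((k * d : ℕ) : ℝ) ^ 3 * d) ^ ((n : ℝ) / 3) <
      (((k * d : ℕ) : ℝ) ^ 3) ^ n := by
  refine pow_mul_rpow_div_three_lt_pow (by positivity) (by positivity) (by positivity) ?_ hn
  have hd3 : 648 * d < (k * d) ^ 3 :=
    calc 648 * d < 26 * 26 * d := by omega
      _ ≤ d * d * d := by gcongr
      _ = d ^ 3 := by ring
      _ ≤ (k * d) ^ 3 := by gcongr; exact Nat.le_mul_of_pos_left d hk
  have key : (6 * k * d) ^ 3 * (3 * (k * d) ^ 3 * d) < ((k * d) ^ 3) ^ 3 :=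
    calc (6 * k * d) ^ 3 * (3 * (k * d) ^ 3 * d) = 648 * d * (k * d) ^ 6 := by ring
      _ < (k * d) ^ 3 * (k * d) ^ 6 := by gcongr
      _ = ((k * d) ^ 3) ^ 3 := by ring
  exact_mod_cast key

-- `P` stands for the grid points of the star, `cK p` and `cA p` for the costs of a request at `p`;
-- the bound `18` is `2c` with `c = 9`.
/-- Counting lower bound for k-Center on the star (Theorem
`kctr.sucks.stars`): requests are grid points of the star (abstracted as a
finite type `P`); `cK p` (resp. `cA p`) is the fixed cost for k-Center
(resp. for the centre-anchored algorithm `A`) to serve a request at `p`,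
and the cost of a sequence is the sum of its per-request costs. With
`m = (kd)³`, if k-Center has at most `2kd + k` points of cost at most `2d`
and at most `md + 2kd` points of larger cost, while `A` has at least
`m = (kd)³` points of cost at most `18` (taking `c = 9`), then for all
sufficiently large `d`: the number of sequences of length `n` that cost
k-Center at most `(2d/3)·n` is at most `(6kd)ⁿ·(3md)^{n/3}`; the number of
sequences costing `A` at most `18·n` is at least `mⁿ = ((kd)³)ⁿ`; strictly
fewer sequences are k-Center-cheap than `A`-cheap; and hence under every
bijection some sequence witnesses a ratio of at least `d/27 = Ω(d)`. -/
theorem kcenter_star_counting_lower_bound (k : ℕ) (hk : 1 ≤ k) :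
    ∃ D : ℕ, ∀ d : ℕ, D ≤ d →
    ∀ (P : Type) [Fintype P] (cK cA : P → ℝ),
    (∀ p, 0 ≤ cK p) → (∀ p, 0 ≤ cA p) →
    (Finset.univ.filter (fun p => cK p ≤ 2 * d)).card ≤ 2 * k * d + k →
    (Finset.univ.filter (fun p => ¬ cK p ≤ 2 * d)).card ≤ (k * d) ^ 3 * d + 2 * k * d →
    (k * d) ^ 3 ≤ (Finset.univ.filter (fun p => cA p ≤ 18)).card →
    ∀ n : ℕ, 1 ≤ n →
      (((Finset.univ.filter
          (fun σ : Fin n → P => ∑ i, cK (σ i) ≤ (2 * (d : ℝ) / 3) * n)).card : ℝ)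
        ≤ (6 * k * d : ℝ) ^ n * ((3 * ((k * d : ℕ) ^ 3) * d : ℝ)) ^ ((n : ℝ) / 3))
      ∧ ((k * d) ^ 3) ^ n
          ≤ (Finset.univ.filter
              (fun σ : Fin n → P => ∑ i, cA (σ i) ≤ 18 * n)).card
      ∧ (Finset.univ.filter
            (fun σ : Fin n → P => ∑ i, cK (σ i) < (2 * (d : ℝ) / 3) * n)).card
          < (Finset.univ.filter
              (fun σ : Fin n → P => ∑ i, cA (σ i) ≤ 18 * n)).card
      ∧ ∀ π : (Fin n → P) ≃ (Fin n → P), ∃ σ : Fin n → P,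
          ((d : ℝ) / 27) * (∑ i, cA (π σ i)) ≤ ∑ i, cK (σ i) := by
  refine ⟨26, fun d hd P _ cK cA hcK _ hG hB hA n hn => ?_⟩
  have hkd : k ≤ k * d := Nat.le_mul_of_pos_right k (by omega)
  have hkd3 : k * d ≤ (k * d) ^ 3 * d :=
    (Nat.le_self_pow (by norm_num) _).trans (Nat.le_mul_of_pos_right _ (by omega))
  have cheapK : (#{σ : Fin n → P | ∑ i, cK (σ i) ≤ 2 * d / 3 * n} : ℝ) ≤
      (6 * k * d : ℝ) ^ n * (3 * ((k * d : ℕ) : ℝ) ^ 3 * d) ^ ((n : ℝ) / 3) := by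
    have h := card_filter_sum_le_mul_le (ι := Fin n) cK hcK (t := 2 * d) (r := n / 3)
      (a := ((3 * k * d : ℕ) : ℝ)) (b := ((3 * (k * d) ^ 3 * d : ℕ) : ℝ)) (by positivity)
      (by exact_mod_cast (by nlinarith)) (by exact_mod_cast (by nlinarith))
      (by exact_mod_cast hG.trans (by nlinarith)) (by exact_mod_cast hB.trans (by nlinarith))
    rw [Fintype.card_fin] at h
    push_cast at h ⊢
    rw [show (6 * k * d : ℝ) = 2 * (3 * k * d) by ring]
    simpa only [mul_div_assoc', div_mul_eq_mul_div] using h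
  have cheapA : ((k * d) ^ 3) ^ n ≤ #{σ : Fin n → P | ∑ i, cA (σ i) ≤ 18 * n} := by
    have h := pow_card_le_card_filter_sum_le (ι := Fin n) cA 18
    rw [Fintype.card_fin] at h
    exact (Nat.pow_le_pow_left hA n).trans h
  have fewerK : #{σ : Fin n → P | ∑ i, cK (σ i) < 2 * d / 3 * n} <
      #{σ : Fin n → P | ∑ i, cA (σ i) ≤ 18 * n} := by
    have hR : (#{σ : Fin n → P | ∑ i, cK (σ i) < 2 * d / 3 * n} : ℝ) <
        #{σ : Fin n → P | ∑ i, cA (σ i) ≤ 18 * n} :=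
      calc _ ≤ (#{σ : Fin n → P | ∑ i, cK (σ i) ≤ 2 * d / 3 * n} : ℝ) := by
            exact_mod_cast card_le_card (monotone_filter_right _ fun _ _ h => le_of_lt h)
        _ < (((k * d : ℕ) : ℝ) ^ 3) ^ n :=
            cheapK.trans_lt (six_mul_pow_mul_rpow_lt_pow hk hd hn)
        _ ≤ _ := by exact_mod_cast cheapA
    exact_mod_cast hR
  refine ⟨cheapK, cheapA, fewerK, fun π => ?_⟩
  obtain ⟨σ, hσK, hσA⟩ := π.exists_notMem_and_apply_mem_of_card_lt fewerK
  simp only [mem_filter, mem_univ, true_and, not_lt] at hσK hσA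
  refine ⟨σ, ?_⟩
  calc (d : ℝ) / 27 * ∑ i, cA (π σ i) ≤ d / 27 * (18 * n) := by gcongr
    _ = 2 * d / 3 * n := by ring
    _ ≤ ∑ i, cK (σ i) := hσK
end

section
/- Optimality transfer by induction: if G is an online algorithm such that every algorithm A that acts like G on the suffix [j+1,n] is G-like extendable at j (i.e., there exist an algorithm B acting like A on the first j−1 requests, acting like G on request j, and a bijection π fixing the first j requests with B(π(σ)) ≤ A(σ)), for all 1 ≤ j ≤ n, then for every algorithm ALG there is a bijection π with G(σ) ≤ ALG(π(σ)) for all σ; i.e., G is bijectively optimal. -/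
/-- Optimality transfer by induction (Theorem `optimality`): `I` is the set of
request sequences of length `n`, `Alg` an abstract type of online algorithms
with cost function `cost`, `G : Alg` the candidate greedy algorithm, and
`GlikeFrom A j` expressing that `A` serves all requests of the suffix
`[j+1, n]` as `G` would. Assume:
* every algorithm is trivially G-like on the empty suffix `[n+1, n]`;
* any algorithm that is G-like on the whole sequence has the same cost as `G`;
* extendability: every `A` that is G-like on the suffix `[j+1, n]`
  (`1 ≤ j ≤ n`) admits an algorithm `B` that is G-like on `[j, n]` and a
  bijection `π` with `cost B (π σ) ≤ cost A σ` for all `σ`.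
Then `G` is bijectively optimal: for every algorithm `ALG` there is a
bijection `π` with `cost G σ ≤ cost ALG (π σ)` for all `σ`. -/
theorem bijective_optimality_by_induction
    {I : Type*} [Fintype I] {Alg : Type*}
    (cost : Alg → I → ℝ) (n : ℕ) (G : Alg)
    (GlikeFrom : Alg → ℕ → Prop)
    (htriv : ∀ A : Alg, GlikeFrom A n)
    (hfull : ∀ A : Alg, GlikeFrom A 0 → ∀ σ, cost A σ = cost G σ)
    (hextend : ∀ (A : Alg) (j : ℕ), 1 ≤ j → j ≤ n → GlikeFrom A j →
      ∃ (B : Alg) (π : I ≃ I), GlikeFrom B (j - 1) ∧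
        ∀ σ, cost B (π σ) ≤ cost A σ) :
    ∀ ALG : Alg, ∃ π : I ≃ I, ∀ σ, cost G σ ≤ cost ALG (π σ) := by
  intro ALG
  have key : ∀ k, k ≤ n → ∃ (B : Alg) (π : I ≃ I),
      GlikeFrom B (n - k) ∧ ∀ σ, cost B (π σ) ≤ cost ALG σ := by
    intro k
    induction k with
    | zero => intro _; exact ⟨ALG, Equiv.refl I, by simpa using htriv ALG, fun σ => le_refl _⟩
    | succ k ih =>
      intro hk
      obtain ⟨B, π, hB, hle⟩ := ih (Nat.le_of_succ_le hk)
      have h1 : 1 ≤ n - k := Nat.le_sub_of_add_le (by omega)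
      obtain ⟨B', π', hB', hle'⟩ := hextend B (n - k) h1 (Nat.sub_le _ _) hB
      refine ⟨B', π.trans π', by simpa [Nat.sub_sub] using hB', fun σ => ?_⟩
      exact le_trans (hle' (π σ)) (hle σ)
  obtain ⟨B, π, hB, hle⟩ := key n le_rfl
  refine ⟨π.symm, fun σ => ?_⟩
  have := hle (π.symm σ)
  simp at this
  rw [← hfull B (by simpa using hB) σ]
  exact this
end
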